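/- arXiv:2311.04045 — 2 statements merged into one kernel-verified Lean document; each statement's English description precedes it below -/
import Mathlib

section
/- If a function Φ:(0,∞)→(0,∞), which is the Laplace exponent Φ(q) = βq + ∫₀^∞(1−e^{−qu})ν(du) of a Lévy measure ν with drift β ≥ 0, satisfies liminf_{x→∞} x·Φ(e^{−x}) > 0, then ∫₀^θ Φ(u)/u du = ∞ for every θ > 0, and consequently ν has no log moment: ∫₁^∞ ln(h) ν(dh) = ∞. -/
/-!
Near `0` the hypothesis says `Φ u / u ≥ ε / (u · (-log u))`, the derivative of `-ε log (-log u)`,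
which is not integrable at `0`. On the other hand, Tonelli and
`∫₀¹ (1 - e^{-uw}) / u du ≤ ∫₀¹ min (w, 1/u) du ≤ min 1 w + log⁺ w` give
`∫₀¹ Φ u / u du ≤ β + ∫ min 1 w dν + ∫_{w > 1} log w dν`, so a finite log moment would make the
first integral finite.
-/

open Real MeasureTheory Filter Set Topology
open scoped ENNReal

lemma sigmaFinite_of_lintegral_ne_top {α : Type*} [MeasurableSpace α] {μ : Measure α}
    {f : α → ℝ≥0∞} (hf : AEMeasurable f μ) (hint : ∫⁻ x, f x ∂μ ≠ ∞)
    (hzero : μ {x | f x = 0} = 0) : SigmaFinite μ := by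
  refine Measure.sigmaFinite_of_countable (S := insert {x | f x = 0}
    (range fun n : ℕ => {x | ((n : ℝ≥0∞) + 1)⁻¹ ≤ f x})) ((countable_range _).insert _) ?_ ?_
  · rintro s (rfl | ⟨n, rfl⟩)
    · simp [hzero]
    · refine (meas_ge_le_lintegral_div hf (by simp) (by simp)).trans_lt ?_
      exact ENNReal.div_lt_top hint (by simp)
  · refine eq_univ_of_forall fun x => ?_
    by_cases hx : f x = 0
    · exact ⟨_, mem_insert _ _, hx⟩
    · obtain ⟨n, hn⟩ := ENNReal.exists_inv_nat_lt hx
      exact ⟨_, mem_insert_of_mem _ ⟨n, rfl⟩,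
        (ENNReal.inv_le_inv.2 le_self_add).trans hn.le⟩

lemma hasDerivAt_log_neg_log {u : ℝ} (h0 : 0 < u) (h1 : u < 1) :
    HasDerivAt (fun v => log (-log v)) (-(u * -log u)⁻¹) u := by
  have hlog : log u < 0 := log_neg h0 h1
  convert HasDerivAt.log (f := fun v => -log v) (hasDerivAt_log h0.ne').neg (by linarith) using 1
  field_simp

lemma not_integrableOn_Ioc_inv_mul_neg_log {δ : ℝ} (hδ : 0 < δ) :
    ¬IntegrableOn (fun u => (u * -log u)⁻¹) (Ioc 0 δ) := by
  have hderiv : deriv (fun v => log (-log v)) =ᶠ[𝓝[>] 0] fun u => -(u * -log u)⁻¹ := by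
    filter_upwards [Ioo_mem_nhdsGT one_pos] with u hu
    exact (hasDerivAt_log_neg_log hu.1 hu.2).deriv
  refine not_integrableOn_of_tendsto_norm_atTop_of_deriv_isBigO_filter (𝓝[>] 0)
    (Ioc_mem_nhdsGT hδ) ?_ ?_ ((Asymptotics.isBigO_refl _ _).neg_left.congr' hderiv.symm .rfl)
  · filter_upwards [Ioo_mem_nhdsGT one_pos] with u hu
    exact (hasDerivAt_log_neg_log hu.1 hu.2).differentiableAt
  · exact tendsto_norm_atTop_atTop.comp
      (tendsto_log_atTop.comp (tendsto_neg_atBot_atTop.comp tendsto_log_nhdsGT_zero))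

lemma setLIntegral_Ioc_inv_mul_neg_log_eq_top {δ : ℝ} (hδ : 0 < δ) (hδ1 : δ ≤ 1) :
    ∫⁻ u in Ioc 0 δ, ENNReal.ofReal (u * -log u)⁻¹ = ⊤ := by
  by_contra h
  refine not_integrableOn_Ioc_inv_mul_neg_log hδ ((lintegral_ofReal_ne_top_iff_integrable
    (by fun_prop) ?_).1 h)
  filter_upwards [ae_restrict_mem measurableSet_Ioc] with u hu
  exact inv_nonneg.2 (mul_nonneg hu.1.le (neg_nonneg.2 (log_nonpos hu.1.le (hu.2.trans hδ1))))

lemma eventually_le_div_self_of_le_mul_exp_neg {Φ : ℝ → ℝ} {ε : ℝ}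
    (h : ∀ᶠ x in atTop, ε ≤ x * Φ (exp (-x))) :
    ∀ᶠ u in 𝓝[>] 0, ε * (u * -log u)⁻¹ ≤ Φ u / u := by
  have h' := (tendsto_neg_atBot_atTop.comp tendsto_log_nhdsGT_zero).eventually h
  filter_upwards [h', Ioo_mem_nhdsGT one_pos] with u hεu hu
  have hlog : 0 < -log u := neg_pos.2 (log_neg hu.1 hu.2)
  simp only [Function.comp_apply, neg_neg, exp_log hu.1] at hεu
  rw [← div_eq_mul_inv, div_le_div_iff₀ (mul_pos hu.1 hlog) hu.1]
  nlinarith [hu.1]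

lemma setLIntegral_Ioc_div_self_eq_top {Φ : ℝ → ℝ} {ε : ℝ} (hε : 0 < ε)
    (h : ∀ᶠ x in atTop, ε ≤ x * Φ (exp (-x))) {θ : ℝ} (hθ : 0 < θ) :
    ∫⁻ u in Ioc 0 θ, ENNReal.ofReal (Φ u / u) = ⊤ := by
  obtain ⟨δ₀, hδ₀, hsub⟩ :=
    mem_nhdsGT_iff_exists_Ioc_subset.1 (eventually_le_div_self_of_le_mul_exp_neg h)
  set δ := min (min θ δ₀) 1
  have hδ : 0 < δ := lt_min (lt_min hθ hδ₀) one_pos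
  have hδθ : δ ≤ θ := (min_le_left _ _).trans (min_le_left _ _)
  have hδδ₀ : δ ≤ δ₀ := (min_le_left _ _).trans (min_le_right _ _)
  refine top_le_iff.1 ?_
  calc ⊤ = ENNReal.ofReal ε * ∫⁻ u in Ioc 0 δ, ENNReal.ofReal (u * -log u)⁻¹ := by
        rw [setLIntegral_Ioc_inv_mul_neg_log_eq_top hδ (min_le_right _ _),
          ENNReal.mul_top (by simpa using hε)]
    _ = ∫⁻ u in Ioc 0 δ, ENNReal.ofReal (ε * (u * -log u)⁻¹) := by
        rw [← lintegral_const_mul' _ _ ENNReal.ofReal_ne_top]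
        simp_rw [ENNReal.ofReal_mul hε.le]
    _ ≤ ∫⁻ u in Ioc 0 δ, ENNReal.ofReal (Φ u / u) :=
        setLIntegral_mono' measurableSet_Ioc fun u hu =>
          ENNReal.ofReal_le_ofReal (hsub (Ioc_subset_Ioc_right hδδ₀ hu))
    _ ≤ ∫⁻ u in Ioc 0 θ, ENNReal.ofReal (Φ u / u) := lintegral_mono_set (Ioc_subset_Ioc_right hδθ)

lemma one_sub_exp_neg_mul_div_le {u w : ℝ} (hu : 0 < u) : (1 - exp (-u * w)) / u ≤ w := by
  rw [div_le_iff₀ hu]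
  nlinarith [add_one_le_exp (-u * w)]

lemma one_sub_exp_neg_mul_div_le_inv {u w : ℝ} (hu : 0 < u) : (1 - exp (-u * w)) / u ≤ u⁻¹ := by
  rw [div_eq_mul_inv]
  nlinarith [exp_pos (-u * w), inv_pos.2 hu]

lemma one_sub_exp_neg_mul_div_nonneg {u w : ℝ} (hu : 0 < u) (hw : 0 ≤ w) :
    0 ≤ (1 - exp (-u * w)) / u :=
  div_nonneg (sub_nonneg.2 (exp_le_one_iff.2 (by nlinarith))) hu.le

lemma setLIntegral_Ioc_ofReal_inv {a b : ℝ} (ha : 0 < a) (hab : a ≤ b) :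
    ∫⁻ u in Ioc a b, ENNReal.ofReal u⁻¹ = ENNReal.ofReal (log (b / a)) := by
  have hint : IntegrableOn (fun u : ℝ => u⁻¹) (Ioc a b) :=
    (continuousOn_inv₀.mono fun u hu => (ha.trans_le hu.1).ne').integrableOn_Icc.mono_set
      Ioc_subset_Icc_self
  rw [← ofReal_integral_eq_lintegral_ofReal hint, ← intervalIntegral.integral_of_le hab,
    integral_inv_of_pos ha (ha.trans_le hab)]
  filter_upwards [ae_restrict_mem measurableSet_Ioc] with u hu
  exact inv_nonneg.2 (ha.trans hu.1).le

lemma setLIntegral_Ioc_zero_one_sub_exp_div_le {w : ℝ} (hw : 0 < w) :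
    ∫⁻ u in Ioc 0 1, ENNReal.ofReal ((1 - exp (-u * w)) / u)
      ≤ ENNReal.ofReal (min 1 w) + ENNReal.ofReal (log w) := by
  have hle_const : ∀ b, ∫⁻ u in Ioc 0 b, ENNReal.ofReal ((1 - exp (-u * w)) / u)
      ≤ ENNReal.ofReal w * ENNReal.ofReal b := fun b => by
    calc _ ≤ ∫⁻ _ in Ioc 0 b, ENNReal.ofReal w :=
          setLIntegral_mono measurable_const fun u hu =>
            ENNReal.ofReal_le_ofReal (one_sub_exp_neg_mul_div_le hu.1)
      _ ≤ _ := by rw [setLIntegral_const, volume_Ioc, sub_zero]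
  rcases le_or_gt w 1 with hw1 | hw1
  · calc _ ≤ ENNReal.ofReal w * ENNReal.ofReal 1 := hle_const 1
      _ ≤ _ := by rw [ENNReal.ofReal_one, mul_one, min_eq_right hw1]; exact le_self_add
  have hinv : 0 < w⁻¹ := inv_pos.2 hw
  have hinv1 : w⁻¹ ≤ 1 := inv_le_one_of_one_le₀ hw1.le
  rw [← Ioc_union_Ioc_eq_Ioc hinv.le hinv1]
  refine (lintegral_union_le _ _ _).trans (add_le_add ?_ ?_)
  · calc _ ≤ ENNReal.ofReal w * ENNReal.ofReal w⁻¹ := hle_const w⁻¹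
      _ = _ := by rw [← ENNReal.ofReal_mul hw.le, mul_inv_cancel₀ hw.ne', min_eq_left hw1.le]
  · calc _ ≤ ∫⁻ u in Ioc w⁻¹ 1, ENNReal.ofReal u⁻¹ :=
          setLIntegral_mono (by fun_prop) fun u hu =>
            ENNReal.ofReal_le_ofReal (one_sub_exp_neg_mul_div_le_inv (hinv.trans hu.1))
      _ = _ := by rw [setLIntegral_Ioc_ofReal_inv hinv hinv1, one_div, inv_inv]

noncomputable def laplaceExponent (β : ℝ) (ν : Measure ℝ) (q : ℝ) : ℝ :=
  β * q + ∫ u, (1 - exp (-q * u)) ∂ν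

lemma lintegral_ofReal_log_eq_setLIntegral_Ioi_one {ν : Measure ℝ} (hν0 : ν (Iic 0) = 0) :
    ∫⁻ w, ENNReal.ofReal (log w) ∂ν = ∫⁻ w in Ioi 1, ENNReal.ofReal (log w) ∂ν := by
  rw [← lintegral_indicator measurableSet_Ioi]
  refine lintegral_congr_ae ?_
  filter_upwards [measure_eq_zero_iff_ae_notMem.1 hν0] with w hw
  rw [mem_Iic, not_le] at hw
  by_cases hw1 : 1 < w
  · rw [indicator_of_mem (show w ∈ Ioi 1 from hw1)]
  · rw [indicator_of_notMem (show w ∉ Ioi 1 from hw1), ENNReal.ofReal_eq_zero]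
    exact log_nonpos hw.le (not_lt.1 hw1)

lemma ofReal_laplaceExponent_div_le (β : ℝ) (ν : Measure ℝ) (hν0 : ν (Iic 0) = 0) {u : ℝ}
    (hu : 0 < u) : ENNReal.ofReal (laplaceExponent β ν u / u)
      ≤ ENNReal.ofReal β + ∫⁻ w, ENNReal.ofReal ((1 - exp (-u * w)) / u) ∂ν := by
  rw [laplaceExponent, add_div, mul_div_cancel_right₀ _ hu.ne', ← integral_div]
  refine ENNReal.ofReal_add_le.trans (add_le_add le_rfl ?_)
  calc _ ≤ ‖∫ w, (1 - exp (-u * w)) / u ∂ν‖ₑ := Real.ofReal_le_enorm _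
    _ ≤ ∫⁻ w, ‖(1 - exp (-u * w)) / u‖ₑ ∂ν := enorm_integral_le_lintegral_enorm _
    _ = _ := by
      refine lintegral_congr_ae ?_
      filter_upwards [measure_eq_zero_iff_ae_notMem.1 hν0] with w hw
      rw [mem_Iic, not_le] at hw
      exact Real.enorm_of_nonneg (one_sub_exp_neg_mul_div_nonneg hu hw.le)

lemma setLIntegral_Ioc_laplaceExponent_div_le (β : ℝ) (ν : Measure ℝ) [SigmaFinite ν]
    (hν0 : ν (Iic 0) = 0) :
    ∫⁻ u in Ioc 0 1, ENNReal.ofReal (laplaceExponent β ν u / u)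
      ≤ ENNReal.ofReal β + (∫⁻ w, ENNReal.ofReal (min 1 w) ∂ν
        + ∫⁻ w in Ioi 1, ENNReal.ofReal (log w) ∂ν) := by
  have hF : Measurable
      (Function.uncurry fun u w : ℝ => ENNReal.ofReal ((1 - exp (-u * w)) / u)) := by
    fun_prop
  calc _ ≤ ∫⁻ u in Ioc 0 1, (ENNReal.ofReal β
          + ∫⁻ w, ENNReal.ofReal ((1 - exp (-u * w)) / u) ∂ν) :=
        setLIntegral_mono (measurable_const.add hF.lintegral_prod_right') fun u hu =>
          ofReal_laplaceExponent_div_le β ν hν0 hu.1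
    _ = ENNReal.ofReal β
          + ∫⁻ w, (∫⁻ u in Ioc 0 1, ENNReal.ofReal ((1 - exp (-u * w)) / u)) ∂ν := by
        rw [lintegral_add_left measurable_const, setLIntegral_const, volume_Ioc, sub_zero,
          ENNReal.ofReal_one, mul_one, lintegral_lintegral_swap hF.aemeasurable]
    _ ≤ ENNReal.ofReal β + ∫⁻ w, (ENNReal.ofReal (min 1 w) + ENNReal.ofReal (log w)) ∂ν := by
        gcongr 1
        refine lintegral_mono_ae ?_
        filter_upwards [measure_eq_zero_iff_ae_notMem.1 hν0] with w hw
        exact setLIntegral_Ioc_zero_one_sub_exp_div_le (not_le.1 hw)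
    _ = _ := by
        rw [lintegral_add_left (by fun_prop), lintegral_ofReal_log_eq_setLIntegral_Ioi_one hν0]

theorem stmt_12_general
    (ν : Measure ℝ) (β : ℝ)
    (hν0 : ν (Iic 0) = 0)
    (hνint : ∫⁻ u, ENNReal.ofReal (min 1 u) ∂ν < ⊤)
    (Φ : ℝ → ℝ)
    (hΦ : ∀ q, 0 ≤ q → Φ q = β * q + ∫ u, (1 - Real.exp (-q * u)) ∂ν)
    (hliminf : ∃ ε > (0:ℝ), ∀ᶠ x in atTop, ε ≤ x * Φ (Real.exp (-x))) :
    (∀ θ > (0:ℝ), ∫⁻ u in Ioc (0:ℝ) θ, ENNReal.ofReal (Φ u / u) = ⊤) ∧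
    ∫⁻ h in Ioi (1:ℝ), ENNReal.ofReal (Real.log h) ∂ν = ⊤ := by
  obtain ⟨ε, hε, hev⟩ := hliminf
  have hdiv : ∀ θ > (0:ℝ), ∫⁻ u in Ioc (0:ℝ) θ, ENNReal.ofReal (Φ u / u) = ⊤ :=
    fun θ hθ => setLIntegral_Ioc_div_self_eq_top hε hev hθ
  refine ⟨hdiv, ?_⟩
  by_contra hlog
  have : SigmaFinite ν :=
    sigmaFinite_of_lintegral_ne_top (by fun_prop) hνint.ne (by simpa [Iic] using hν0)
  have hΦ_eq : ∫⁻ u in Ioc 0 1, ENNReal.ofReal (Φ u / u)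
      = ∫⁻ u in Ioc 0 1, ENNReal.ofReal (laplaceExponent β ν u / u) :=
    setLIntegral_congr_fun measurableSet_Ioc fun u hu => by rw [hΦ u hu.1.le, laplaceExponent]
  have hbound := setLIntegral_Ioc_laplaceExponent_div_le β ν hν0
  rw [← hΦ_eq, hdiv 1 one_pos, top_le_iff] at hbound
  exact ENNReal.add_ne_top.2 ⟨ENNReal.ofReal_ne_top, ENNReal.add_ne_top.2 ⟨hνint.ne, hlog⟩⟩ hbound

/-- if `liminf_{x→∞} x Φ(e^{−x}) > 0` then `∫₀^θ Φ(u)/u du = ∞`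
for every θ > 0, and ν has no log moment. -/
theorem stmt_12
    (ν : Measure ℝ) (β : ℝ) (hβ : 0 ≤ β)
    (hν0 : ν (Iic 0) = 0)
    (hνint : ∫⁻ u, ENNReal.ofReal (min 1 u) ∂ν < ⊤)
    (Φ : ℝ → ℝ)
    (hΦ : ∀ q, 0 ≤ q → Φ q = β * q + ∫ u, (1 - Real.exp (-q * u)) ∂ν)
    (hliminf : ∃ ε > (0:ℝ), ∀ᶠ x in atTop, ε ≤ x * Φ (Real.exp (-x))) :
    (∀ θ > (0:ℝ), ∫⁻ u in Ioc (0:ℝ) θ, ENNReal.ofReal (Φ u / u) = ⊤) ∧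
    ∫⁻ h in Ioi (1:ℝ), ENNReal.ofReal (Real.log h) ∂ν = ⊤ :=
  stmt_12_general ν β hν0 hνint Φ hΦ hliminf
end

section
/- Let Φ:[0,∞)→[0,∞) be a continuous strictly increasing bijection of [0,∞) onto [0,∞) whose restriction to (0,∞) is slowly varying at 0. Let (Y_t)_{t≥0} be a subordinator with Laplace exponent Φ on some probability space. Then for every n ≥ 1, all times 0 = s₀ < s₁ < … < s_n, and all x₁,…,x_n > 0: lim_{t→∞} P( Φ^{-1}(x_j/t)·Y_{s_j·t} ≤ 1 for all j = 1,…,n ) = exp( −Σ_{i=1}^n (s_i − s_{i−1})·max{x_i, x_{i+1}, …, x_n} ). Equivalently, setting y_j := 1/x_j, the limit equals F^{s₁}(y'₁)·F^{s₂−s₁}(y'₂)⋯F^{s_n−s_{n−1}}(y'_n) with F(y) = e^{−1/y} and y'_i = min{y_i,…,y_n}, which are the finite-dimensional distribution functions of the extremal process based on the measure μ(dy) = dy/y². -/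
/-!
Write `M i = max_{j ≥ i} x j`. Slow variation turns `t Φ(θ Φ⁻¹(m/t)) → m` into a limit that does
not depend on `θ > 0`, so the Laplace transform of the rescaled increment
`Φ⁻¹(m/t) (Y_{bt} - Y_{at})` tends to the constant `exp (-(b - a) m)`: in the limit its law is an
atom at `0` of that mass, the rest escaping to `∞`, hence `P(increment ≤ r) → exp (-(b - a) m)`
for every level `r > 0`. Since `Y` is nondecreasing, the event `∀ j, Φ⁻¹(x j/t) Y_{s_{j+1} t} ≤ 1`
lies between "every increment over `[s_i t, s_{i+1} t]`, rescaled by `Φ⁻¹(M i/t)`, is at most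
`1/(n+1)`" and the same with level `1`; by independence of the increments both have probability
tending to `∏ i, exp (-(s_{i+1} - s_i) M i)`.
-/

open Real MeasureTheory Filter Set Topology ProbabilityTheory

section RightInverse

variable {Φ Φinv : ℝ → ℝ}

lemma tendsto_rightInv_nhdsGT_zero (hΦ0 : Φ 0 = 0) (hΦ : StrictMonoOn Φ (Ici 0))
    (hmaps : MapsTo Φinv (Ici 0) (Ici 0)) (hinv : RightInvOn Φinv Φ (Ici 0)) :
    Tendsto Φinv (𝓝[>] 0) (𝓝[>] 0) := by
  have hpos : ∀ y > 0, 0 < Φinv y := fun y hy => (hmaps hy.le).lt_of_ne fun h => by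
    have := hinv.eq hy.le
    rw [← h, hΦ0] at this
    linarith
  refine tendsto_nhdsWithin_iff.2 ⟨tendsto_order.2 ⟨fun a ha => ?_, fun ε hε => ?_⟩,
    eventually_nhdsWithin_of_forall hpos⟩
  · exact eventually_nhdsWithin_of_forall fun y hy => ha.trans (hpos y hy)
  · have hΦε : 0 < Φ ε := hΦ0 ▸ hΦ self_mem_Ici hε.le hε
    filter_upwards [Ioo_mem_nhdsGT hΦε] with y hy
    by_contra! h
    have := hΦ.monotoneOn hε.le (hmaps hy.1.le) h
    rw [hinv.eq hy.1.le] at this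
    exact this.not_gt hy.2

lemma tendsto_mul_apply_mul_rightInv_div (hΦ0 : Φ 0 = 0) (hΦ : StrictMonoOn Φ (Ici 0))
    (hmaps : MapsTo Φinv (Ici 0) (Ici 0)) (hinv : RightInvOn Φinv Φ (Ici 0)) {θ m : ℝ}
    (hSV : Tendsto (fun x => Φ (θ * x) / Φ x) (𝓝[>] 0) (𝓝 1)) (hm : 0 < m) :
    Tendsto (fun t => t * Φ (θ * Φinv (m / t))) atTop (𝓝 m) := by
  have hdiv : Tendsto (fun t : ℝ => m / t) atTop (𝓝[>] 0) :=
    tendsto_nhdsWithin_iff.2 ⟨tendsto_const_nhds.div_atTop tendsto_id,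
      eventually_gt_atTop 0 |>.mono fun t ht => div_pos hm ht⟩
  have := ((hSV.comp (tendsto_rightInv_nhdsGT_zero hΦ0 hΦ hmaps hinv)).comp hdiv).const_mul m
  rw [mul_one] at this
  refine this.congr' ?_
  filter_upwards [eventually_gt_atTop 0] with t ht
  simp only [Function.comp_apply, hinv.eq (div_pos hm ht).le]
  field_simp

end RightInverse

section LaplaceCriterion

variable {Ω ι : Type*} [MeasurableSpace Ω] {P : Measure Ω} [IsProbabilityMeasure P]

lemma integrable_exp_neg_mul_of_ae_nonneg {Z : Ω → ℝ} (hZ : AEMeasurable Z P)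
    (hZ0 : ∀ᵐ ω ∂P, 0 ≤ Z ω) {θ : ℝ} (hθ : 0 ≤ θ) : Integrable (fun ω => exp (-θ * Z ω)) P := by
  refine .of_mem_Icc 0 1 (measurable_exp.comp_aemeasurable (hZ.const_mul _)) ?_
  filter_upwards [hZ0] with ω hω
  exact ⟨(exp_pos _).le, exp_le_one_iff.2 (by nlinarith)⟩

lemma mgf_neg_le_measureReal_le_add {Z : Ω → ℝ} (hZ : Measurable Z) (hZ0 : ∀ᵐ ω ∂P, 0 ≤ Z ω)
    {θ : ℝ} (hθ : 0 ≤ θ) (r : ℝ) :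
    mgf Z P (-θ) ≤ P.real {ω | Z ω ≤ r} + exp (-θ * r) := by
  have hS : MeasurableSet {ω | Z ω ≤ r} := measurableSet_le hZ measurable_const
  calc mgf Z P (-θ) ≤ ∫ ω, ({ω | Z ω ≤ r}.indicator 1 ω + exp (-θ * r)) ∂P := by
        refine integral_mono_ae (integrable_exp_neg_mul_of_ae_nonneg hZ.aemeasurable hZ0 hθ)
          ((integrable_const 1).indicator hS |>.add (integrable_const _)) ?_
        filter_upwards [hZ0] with ω hω
        by_cases hω' : Z ω ≤ r
        · rw [indicator_of_mem (show ω ∈ {ω | Z ω ≤ r} from hω'), Pi.one_apply]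
          have : exp (-θ * Z ω) ≤ 1 := exp_le_one_iff.2 (by nlinarith)
          linarith [exp_pos (-θ * r)]
        · rw [indicator_of_notMem (show ω ∉ {ω | Z ω ≤ r} from hω'), zero_add]
          exact exp_le_exp.2 (by nlinarith)
    _ = P.real {ω | Z ω ≤ r} + exp (-θ * r) := by
        rw [integral_add ((integrable_const 1).indicator hS) (integrable_const _),
          integral_indicator_one hS, integral_const, probReal_univ, one_smul]

theorem tendsto_measureReal_le_of_tendsto_mgf_neg {Z : ι → Ω → ℝ} {l : Filter ι} {L : ℝ}
    (hZ : ∀ i, Measurable (Z i)) (hZ0 : ∀ᶠ i in l, ∀ᵐ ω ∂P, 0 ≤ Z i ω)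
    (hmgf : ∀ θ > 0, Tendsto (fun i => mgf (Z i) P (-θ)) l (𝓝 L)) {r : ℝ} (hr : 0 < r) :
    Tendsto (fun i => P.real {ω | Z i ω ≤ r}) l (𝓝 L) := by
  refine tendsto_order.2 ⟨fun a ha => ?_, fun b hb => ?_⟩
  · have hexp : Tendsto (fun θ => exp (-θ * r)) atTop (𝓝 0) := by
      refine tendsto_exp_atBot.comp ?_
      simpa [Function.comp_def] using
        tendsto_neg_atTop_atBot.comp (tendsto_id.atTop_mul_const hr)
    obtain ⟨θ, hθ, hsmall⟩ :=
      ((eventually_gt_atTop 0).and (hexp.eventually (gt_mem_nhds (sub_pos.2 ha)))).exists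
    have hlim : a + exp (-θ * r) < L := by linarith
    filter_upwards [hZ0, (hmgf θ hθ).eventually (lt_mem_nhds hlim)] with i hZi hi
    linarith [mgf_neg_le_measureReal_le_add (hZ i) hZi hθ.le r]
  · have hexp : Tendsto (fun θ => exp (θ * r) * L) (𝓝[>] 0) (𝓝 L) := by
      have : Continuous fun θ => exp (θ * r) * L := by fun_prop
      simpa using (this.tendsto 0).mono_left nhdsWithin_le_nhds
    obtain ⟨θ, hθ, hsmall⟩ : ∃ θ > 0, exp (θ * r) * L < b :=
      (eventually_mem_nhdsWithin.and (hexp.eventually (gt_mem_nhds hb))).exists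
    have hlim := (hmgf θ hθ).const_mul (exp (θ * r))
    filter_upwards [hZ0, hlim.eventually (gt_mem_nhds hsmall)] with i hZi hi
    have hchernoff := measure_le_le_exp_mul_mgf r (neg_nonpos.2 hθ.le)
      (integrable_exp_neg_mul_of_ae_nonneg (hZ i).aemeasurable hZi hθ.le)
    rw [neg_neg] at hchernoff
    linarith

end LaplaceCriterion

section MonotonePath

variable {n : ℕ} {y : Fin (n + 1) → ℝ} {c d : Fin n → ℝ}

lemma increment_mul_le_one_of_forall_mul_le_one (hy0 : 0 ≤ y 0) (hy : Monotone y)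
    (hd0 : ∀ i, 0 ≤ d i) (hd : ∀ i, ∃ j, i ≤ j ∧ d i = c j) (h : ∀ j, c j * y j.succ ≤ 1)
    (i : Fin n) : d i * (y i.succ - y i.castSucc) ≤ 1 := by
  obtain ⟨j, hij, hdc⟩ := hd i
  have hyi : 0 ≤ y i.castSucc := hy0.trans (hy (Fin.zero_le _))
  have hyj : y i.succ ≤ y j.succ := hy (Fin.succ_le_succ_iff.2 hij)
  calc d i * (y i.succ - y i.castSucc) ≤ d i * y j.succ :=
        mul_le_mul_of_nonneg_left (by linarith) (hd0 i)
    _ = c j * y j.succ := by rw [hdc]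
    _ ≤ 1 := h j

lemma mul_le_of_forall_increment_mul_le (hy0 : y 0 = 0) (hy : Monotone y)
    (hcd : ∀ i j, i ≤ j → c j ≤ d i) {r : ℝ} (h : ∀ i, d i * (y i.succ - y i.castSucc) ≤ r)
    (j : Fin n) : c j * y j.succ ≤ ((j : ℕ) + 1) * r := by
  -- telescoping `y j.succ` into increments, each weighted by `c j ≤ d i`
  have key : ∀ k : Fin (n + 1), k ≤ j.succ → c j * y k ≤ (k : ℕ) * r := by
    refine Fin.induction (fun _ => by simp [hy0]) fun i ih hi => ?_
    have hij : i ≤ j := Fin.succ_le_succ_iff.1 hi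
    have hinc : 0 ≤ y i.succ - y i.castSucc := sub_nonneg.2 (hy (Fin.castSucc_le_succ i))
    calc c j * y i.succ = c j * y i.castSucc + c j * (y i.succ - y i.castSucc) := by ring
      _ ≤ (i : ℕ) * r + d i * (y i.succ - y i.castSucc) :=
          add_le_add (ih ((Fin.castSucc_le_succ i).trans hi))
            (mul_le_mul_of_nonneg_right (hcd i j hij) hinc)
      _ ≤ ((i.succ : ℕ) : ℝ) * r := by rw [Fin.val_succ]; push_cast; linarith [h i]
  simpa using key j.succ le_rfl

end MonotonePath

lemma ae_monotone_of_forall_ae_le {Ω ι : Type*} [MeasurableSpace Ω] {P : Measure Ω}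
    [Preorder ι] [Countable ι] {X : ι → Ω → ℝ}
    (hX : ∀ k l, k ≤ l → ∀ᵐ ω ∂P, X k ω ≤ X l ω) : ∀ᵐ ω ∂P, Monotone fun k => X k ω := by
  have : ∀ k l, ∀ᵐ ω ∂P, k ≤ l → X k ω ≤ X l ω := fun k l => by
    by_cases hkl : k ≤ l
    · filter_upwards [hX k l hkl] with ω h _ using h
    · exact ae_of_all _ fun ω h => absurd h hkl
  simp only [← ae_all_iff] at this
  exact this

section Subordinator

variable {Ω : Type*} [MeasurableSpace Ω] {P : Measure Ω} [IsProbabilityMeasure P]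
  {Y : ℝ → Ω → ℝ} {Φ Φinv : ℝ → ℝ}

lemma tendsto_measureReal_scaled_increment_le (hYmeas : ∀ t, Measurable (Y t))
    (hYmono : ∀ s t : ℝ, 0 ≤ s → s ≤ t → ∀ᵐ ω ∂P, Y s ω ≤ Y t ω)
    (hLaplace : ∀ s t l : ℝ, 0 ≤ s → s ≤ t → 0 ≤ l →
      ∫ ω, exp (-(l * (Y t ω - Y s ω))) ∂P = exp (-((t - s) * Φ l)))
    (hΦ0 : Φ 0 = 0) (hΦ : StrictMonoOn Φ (Ici 0))
    (hmaps : MapsTo Φinv (Ici 0) (Ici 0)) (hinv : RightInvOn Φinv Φ (Ici 0))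
    (hSV : ∀ θ > 0, Tendsto (fun x => Φ (θ * x) / Φ x) (𝓝[>] 0) (𝓝 1))
    {a b m r : ℝ} (ha : 0 ≤ a) (hab : a ≤ b) (hm : 0 < m) (hr : 0 < r) :
    Tendsto (fun t => P.real {ω | Φinv (m / t) * (Y (b * t) ω - Y (a * t) ω) ≤ r}) atTop
      (𝓝 (exp (-((b - a) * m)))) := by
  refine tendsto_measureReal_le_of_tendsto_mgf_neg
    (fun t => ((hYmeas _).sub (hYmeas _)).const_mul _) ?_ (fun θ hθ => ?_) hr
  · filter_upwards [eventually_gt_atTop 0] with t ht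
    filter_upwards [hYmono (a * t) (b * t) (by positivity) (by gcongr)] with ω hω
    exact mul_nonneg (hmaps (div_pos hm ht).le) (sub_nonneg.2 hω)
  · have hlim := tendsto_mul_apply_mul_rightInv_div hΦ0 hΦ hmaps hinv (hSV θ hθ) hm
    refine ((continuous_exp.tendsto _).comp ((hlim.const_mul (b - a)).neg)).congr' ?_
    filter_upwards [eventually_gt_atTop 0] with t ht
    have hu : 0 ≤ θ * Φinv (m / t) :=
      mul_nonneg hθ.le (hmaps (div_pos hm ht).le)
    calc exp (-((b - a) * (t * Φ (θ * Φinv (m / t)))))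
        = exp (-((b * t - a * t) * Φ (θ * Φinv (m / t)))) := by ring_nf
      _ = ∫ ω, exp (-(θ * Φinv (m / t) * (Y (b * t) ω - Y (a * t) ω))) ∂P :=
          (hLaplace _ _ _ (by positivity) (by gcongr) hu).symm
      _ = mgf _ P (-θ) := by
          simp only [mgf, Pi.sub_apply, neg_mul, mul_assoc]

lemma tendsto_measureReal_forall_scaled_increment_le {n : ℕ} (hYmeas : ∀ t, Measurable (Y t))
    (hYmono : ∀ s t : ℝ, 0 ≤ s → s ≤ t → ∀ᵐ ω ∂P, Y s ω ≤ Y t ω)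
    (hYindep : ∀ τ : Fin (n + 1) → ℝ, (∀ i, 0 ≤ τ i) → Monotone τ →
      iIndepFun (fun (i : Fin n) ω => Y (τ i.succ) ω - Y (τ i.castSucc) ω) P)
    (hLaplace : ∀ s t l : ℝ, 0 ≤ s → s ≤ t → 0 ≤ l →
      ∫ ω, exp (-(l * (Y t ω - Y s ω))) ∂P = exp (-((t - s) * Φ l)))
    (hΦ0 : Φ 0 = 0) (hΦ : StrictMonoOn Φ (Ici 0))
    (hmaps : MapsTo Φinv (Ici 0) (Ici 0)) (hinv : RightInvOn Φinv Φ (Ici 0))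
    (hSV : ∀ θ > 0, Tendsto (fun x => Φ (θ * x) / Φ x) (𝓝[>] 0) (𝓝 1))
    {s : Fin (n + 1) → ℝ} (hs0 : 0 ≤ s 0) (hs : Monotone s)
    {M : Fin n → ℝ} (hM : ∀ i, 0 < M i) {r : ℝ} (hr : 0 < r) :
    Tendsto (fun t => P.real
        {ω | ∀ i, Φinv (M i / t) * (Y (s i.succ * t) ω - Y (s i.castSucc * t) ω) ≤ r})
      atTop (𝓝 (exp (-∑ i, (s i.succ - s i.castSucc) * M i))) := by
  have hs_nonneg : ∀ k, 0 ≤ s k := fun k => hs0.trans (hs (Fin.zero_le k))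
  rw [← Finset.sum_neg_distrib, exp_sum]
  refine (tendsto_finsetProd _ fun i _ => tendsto_measureReal_scaled_increment_le hYmeas hYmono
    hLaplace hΦ0 hΦ hmaps hinv hSV (hs_nonneg _) (hs (Fin.castSucc_le_succ i)) (hM i) hr).congr' ?_
  filter_upwards [eventually_gt_atTop 0] with t ht
  have hindep := hYindep (fun k => s k * t) (fun k => mul_nonneg (hs_nonneg k) ht.le)
    fun k l hkl => mul_le_mul_of_nonneg_right (hs hkl) ht.le
  have hprod := hindep.measure_inter_preimage_eq_mul Finset.univ
    (sets := fun i => {z | Φinv (M i / t) * z ≤ r})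
    fun i _ => measurableSet_le (measurable_const_mul _) measurable_const
  have hevent : {ω | ∀ i, Φinv (M i / t) * (Y (s i.succ * t) ω - Y (s i.castSucc * t) ω) ≤ r} =
      ⋂ i ∈ Finset.univ, (fun ω => Y (s i.succ * t) ω - Y (s i.castSucc * t) ω) ⁻¹'
        {z | Φinv (M i / t) * z ≤ r} := by
    ext ω; simp
  rw [hevent, measureReal_def, hprod, ENNReal.toReal_prod]
  rfl

end Subordinator

/-- convergence of the finite-dimensional distributions of the
renormalised subordinator towards those of the extremal process based on
`μ(dy) = dy/y²`. -/
theorem stmt_18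
    {Ω : Type*} [MeasurableSpace Ω] (P : Measure Ω) [IsProbabilityMeasure P]
    (Y : ℝ → Ω → ℝ)
    (hYmeas : ∀ t, Measurable (Y t))
    (hY0 : ∀ᵐ ω ∂P, Y 0 ω = 0)
    (hYmono : ∀ s t : ℝ, 0 ≤ s → s ≤ t → ∀ᵐ ω ∂P, Y s ω ≤ Y t ω)
    (hYindep : ∀ (m : ℕ) (τ : Fin (m + 1) → ℝ), (∀ i, 0 ≤ τ i) → Monotone τ →
      iIndepFun (m := fun _ : Fin m => Real.measurableSpace)
        (fun i ω => Y (τ i.succ) ω - Y (τ i.castSucc) ω) P)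
    -- Φ : continuous strictly increasing bijection of [0,∞) onto [0,∞)
    (Φ Φinv : ℝ → ℝ)
    (hΦ0 : Φ 0 = 0)
    (hΦmono : StrictMonoOn Φ (Ici 0))
    (hΦinv : ∀ x ≥ (0:ℝ), Φinv (Φ x) = x ∧ Φ (Φinv x) = x ∧ 0 ≤ Φinv x)
    (hSV : ∀ l > (0:ℝ), Tendsto (fun x => Φ (l * x) / Φ x) (𝓝[>] 0) (𝓝 1))
    -- (Y_t) is a subordinator with Laplace exponent Φ
    (hLaplace : ∀ s t l : ℝ, 0 ≤ s → s ≤ t → 0 ≤ l →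
      ∫ ω, Real.exp (-(l * (Y t ω - Y s ω))) ∂P = Real.exp (-((t - s) * Φ l)))
    (n : ℕ)
    (s : Fin (n + 1) → ℝ) (hs0 : s 0 = 0) (hsmono : StrictMono s)
    (x : Fin n → ℝ) (hx : ∀ j, 0 < x j) :
    Tendsto
      (fun t => (P {ω | ∀ j : Fin n, Φinv (x j / t) * Y (s j.succ * t) ω ≤ 1}).toReal)
      atTop
      (𝓝 (Real.exp (-(∑ i : Fin n, (s i.succ - s i.castSucc) *
        ((Finset.univ.filter fun j => i ≤ j).sup'
          ⟨i, by simp⟩ x))))) := by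
  have hmaps : MapsTo Φinv (Ici 0) (Ici 0) := fun y hy => (hΦinv y hy).2.2
  have hinv : RightInvOn Φinv Φ (Ici 0) := fun y hy => (hΦinv y hy).2.1
  set M : Fin n → ℝ := fun i => (Finset.univ.filter fun j => i ≤ j).sup' ⟨i, by simp⟩ x
  have hMx : ∀ i, ∃ j, i ≤ j ∧ M i = x j := fun i => by
    obtain ⟨j, hj, hjeq⟩ :=
      Finset.exists_mem_eq_sup' (s := Finset.univ.filter (i ≤ ·)) ⟨i, by simp⟩ x
    exact ⟨j, by simpa using hj, hjeq⟩
  have hMge : ∀ i j, i ≤ j → x j ≤ M i := fun i j hij => Finset.le_sup' x (by simpa using hij)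
  have hMpos : ∀ i, 0 < M i := fun i => (hx i).trans_le (hMge i i le_rfl)
  have hcd : ∀ t > 0, ∀ i j, i ≤ j → Φinv (x j / t) ≤ Φinv (M i / t) := fun t ht i j hij =>
    Function.monotoneOn_of_rightInvOn_of_mapsTo hΦmono.monotoneOn hinv hmaps
      (div_pos (hx j) ht).le (div_pos (hMpos i) ht).le (by gcongr; exact hMge i j hij)
  have hpath : ∀ t > 0, ∀ᵐ ω ∂P, Y (s 0 * t) ω = 0 ∧ Monotone fun k => Y (s k * t) ω :=
    fun t ht => by
      rw [hs0, zero_mul]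
      refine hY0.and (ae_monotone_of_forall_ae_le fun k l hkl => hYmono _ _ ?_ ?_)
      · exact mul_nonneg (hs0 ▸ hsmono.monotone (Fin.zero_le k)) ht.le
      · exact mul_le_mul_of_nonneg_right (hsmono.monotone hkl) ht.le
  have hlim := fun r (hr : 0 < r) => tendsto_measureReal_forall_scaled_increment_le hYmeas hYmono
    (hYindep n) hLaplace hΦ0 hΦmono hmaps hinv hSV hs0.ge hsmono.monotone hMpos hr
  refine tendsto_of_tendsto_of_tendsto_of_le_of_le' (hlim (1 / (n + 1)) (by positivity))
    (hlim 1 one_pos) ?_ ?_ <;> filter_upwards [eventually_gt_atTop 0] with t ht <;>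
    refine ENNReal.toReal_mono (measure_ne_top _ _) (measure_mono_ae ?_) <;>
    filter_upwards [hpath t ht] with ω ⟨hy0, hy⟩ hω
  · refine fun j => (mul_le_of_forall_increment_mul_le hy0 hy (hcd t ht) hω j).trans ?_
    rw [mul_one_div, div_le_one (by positivity)]
    exact_mod_cast Nat.succ_le_succ j.isLt.le
  · exact increment_mul_le_one_of_forall_mul_le_one hy0.ge hy
      (fun i => hmaps (div_pos (hMpos i) ht).le)
      (fun i => (hMx i).imp fun j ⟨hij, h⟩ => ⟨hij, by rw [h]⟩) hω
end
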